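/- arXiv:2104.11126 — 3 statements merged into one kernel-verified Lean document; each statement's English description precedes it below -/
import Mathlib

section
/- Let γ∈ℝ, β≠0, θ>0 and δ_c>0. Suppose (δ,η) is a regular solution of the polytropic static system on [0,R) with R<∞, δ(0)=η(0)=δ_c, satisfying 0<δ(r)<η(r)≤δ_c and η'(r)<0 for all r∈(0,R), and suppose the solution is maximal, i.e., there is no R′>R and regular solution on [0,R′) extending (δ,η). Then lim_{r→R⁻}δ(r)=0 and lim_{r→R⁻}η(r)=(3/R³)∫₀^R δ(s)s² ds > 0. -/
open Real Set Filter Topology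

noncomputable section

/-- `B(y) = (y + (β−1)y^{1+β} − βy^β)/(β(β−1))` for `β ≠ 1`, and
`B(y) = y(y − log y − 1)` for `β = 1`. -/
def Bfun (β y : ℝ) : ℝ :=
  if β = 1 then y * (y - Real.log y - 1)
  else (y + (β - 1) * y ^ (1 + β) - β * y ^ β) / (β * (β - 1))

/-- The right-hand side of the polytropic static equation
`δ' = (δ/η)^{1−β}(3(β−γ)B(δ/η)η/r − θ r η^{2−γ} δ)`. -/
def polyRHS (γ β θ d e r : ℝ) : ℝ :=
  (d / e) ^ (1 - β) * (3 * (β - γ) * Bfun β (d / e) * e / r - θ * r * e ^ (2 - γ) * d)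

/-- `η(r) = (3/r³) ∫₀ʳ δ(s) s² ds`. -/
def polyEta (δ : ℝ → ℝ) (r : ℝ) : ℝ := 3 / r ^ 3 * ∫ s in (0:ℝ)..r, δ s * s ^ 2

/-- A regular solution of the polytropic static system on `[0,R)`:
`δ ∈ C⁰([0,R)) ∩ C¹((0,R))`, `δ > 0` on `[0,R)`, with `η(r) = (3/r³)∫₀ʳ δ(s)s² ds`,
`η(0) = δ(0)`, satisfying the static equation on `(0,R)`. -/
def IsRegularPoly (γ β θ R : ℝ) (δ η : ℝ → ℝ) : Prop :=
  ContinuousOn δ (Ico 0 R) ∧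
  (∀ r ∈ Ioo 0 R, DifferentiableAt ℝ δ r) ∧
  ContinuousOn (deriv δ) (Ioo 0 R) ∧
  (∀ r ∈ Ico 0 R, 0 < δ r) ∧
  η 0 = δ 0 ∧
  (∀ r ∈ Ioo 0 R, η r = polyEta δ r) ∧
  (∀ r ∈ Ioo 0 R, deriv δ r = polyRHS γ β θ (δ r) (η r) r)

/-- A strongly regular solution: regular, `δ ∈ C¹([0,R))` with `δ'(0) = 0` and
`δ'(r) → 0` as `r → 0⁺`. -/
def IsStronglyRegularPoly (γ β θ R : ℝ) (δ η : ℝ → ℝ) : Prop :=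
  IsRegularPoly γ β θ R δ η ∧
  HasDerivWithinAt δ 0 (Ico 0 R) 0 ∧
  Tendsto (deriv δ) (𝓝[>] 0) (𝓝 0)

/-- A regular solution of the polytropic static system on `[0,∞)`. -/
def IsRegularPolyGlobal (γ β θ : ℝ) (δ η : ℝ → ℝ) : Prop :=
  ContinuousOn δ (Ici 0) ∧
  (∀ r ∈ Ioi (0:ℝ), DifferentiableAt ℝ δ r) ∧
  ContinuousOn (deriv δ) (Ioi 0) ∧
  (∀ r ∈ Ici (0:ℝ), 0 < δ r) ∧
  η 0 = δ 0 ∧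
  (∀ r ∈ Ioi (0:ℝ), η r = polyEta δ r) ∧
  (∀ r ∈ Ioi (0:ℝ), deriv δ r = polyRHS γ β θ (δ r) (η r) r)

/-- A strongly regular solution of the polytropic static system on `[0,∞)`. -/
def IsStronglyRegularPolyGlobal (γ β θ : ℝ) (δ η : ℝ → ℝ) : Prop :=
  IsRegularPolyGlobal γ β θ δ η ∧
  HasDerivWithinAt δ 0 (Ici 0) 0 ∧
  Tendsto (deriv δ) (𝓝[>] 0) (𝓝 0)

/-! Since `0 < δ < η ≤ δ_c`, the density is bounded, so the mass `∫₀ʳ δ s² ds` converges as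
`r → R⁻` and `η` tends to `polyEta δ R > 0`. If `δ` did not tend to `0`, it would exceed some
`a > 0` at radii arbitrarily close to `R`. Where `a/2 ≤ δ`, the right-hand side of the equation
is bounded (a continuous function on a compact box), so `δ` cannot fall from `a` below `a/2` on a
short interval; hence `δ ≥ a/2` near `R`, `δ'` is bounded there and `δ` has a limit `L > 0`.
Solving the system for `(δ, mass)` from `(L, mass(R))` at `r = R` then continues `δ` to a regular
solution on a longer interval, contradicting maximality. -/

open MeasureTheory

theorem integrableOn_Icc_of_continuousOn_Ioo_of_abs_le {f : ℝ → ℝ} {a b C : ℝ}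
    (hf : ContinuousOn f (Ioo a b)) (hC : ∀ x ∈ Ioo a b, |f x| ≤ C) :
    IntegrableOn f (Icc a b) := by
  rw [integrableOn_Icc_iff_integrableOn_Ioo]
  exact .of_bound measure_Ioo_lt_top (hf.aestronglyMeasurable measurableSet_Ioo) C
    (ae_restrict_of_forall_mem measurableSet_Ioo hC)

theorem tendsto_intervalIntegral_nhdsLT {f : ℝ → ℝ} {a b C : ℝ} (hab : a < b)
    (hf : ContinuousOn f (Ioo a b)) (hC : ∀ x ∈ Ioo a b, |f x| ≤ C) :
    Tendsto (fun r => ∫ x in a..r, f x) (𝓝[<] b) (𝓝 (∫ x in a..b, f x)) := by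
  have hint := integrableOn_Icc_of_continuousOn_Ioo_of_abs_le hf hC
  rw [← uIcc_of_le hab.le] at hint
  have hcont := intervalIntegral.continuousOn_primitive_interval hint b right_mem_uIcc
  refine hcont.tendsto.mono_left (nhdsWithin_le_of_mem ?_)
  rw [uIcc_of_le hab.le]
  exact mem_of_superset (Ioo_mem_nhdsLT hab) Ioo_subset_Icc_self

theorem hasDerivAt_integral_of_continuousOn_Ico {f : ℝ → ℝ} {a b x : ℝ}
    (hf : ContinuousOn f (Ico a b)) (hx : x ∈ Ioo a b) :
    HasDerivAt (fun u => ∫ t in a..u, f t) (f x) x := by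
  refine intervalIntegral.integral_hasDerivAt_right ?_
    ((hf.mono Ioo_subset_Ico_self).stronglyMeasurableAtFilter isOpen_Ioo x hx)
    (hf.continuousAt (Ico_mem_nhds hx.1 hx.2))
  refine ContinuousOn.intervalIntegrable (hf.mono ?_)
  rw [uIcc_of_le hx.1.le]
  exact Icc_subset_Ico_right hx.2

theorem exists_tendsto_nhdsLT_of_abs_deriv_le {f : ℝ → ℝ} {b C : ℝ}
    (hd : ∀ᶠ x in 𝓝[<] b, DifferentiableAt ℝ f x)
    (hcd : ∀ᶠ x in 𝓝[<] b, ContinuousAt (deriv f) x)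
    (hC : ∀ᶠ x in 𝓝[<] b, |deriv f x| ≤ C) :
    ∃ L, Tendsto f (𝓝[<] b) (𝓝 L) := by
  obtain ⟨a, hab, hsub⟩ := mem_nhdsLT_iff_exists_Ioo_subset.1 (hd.and (hcd.and hC))
  obtain ⟨c, hac, hcb⟩ := exists_between (show a < b from hab)
  have hsub' : Ioo c b ⊆ Ioo a b := Ioo_subset_Ioo_left hac.le
  have hftc : ∀ r ∈ Ioo c b, f r = f c + ∫ x in c..r, deriv f x := by
    intro r hr
    have hcr : uIcc c r ⊆ Ioo a b := fun x hx => by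
      rw [uIcc_of_le hr.1.le] at hx
      exact ⟨hac.trans_le hx.1, hx.2.trans_lt hr.2⟩
    rw [intervalIntegral.integral_eq_sub_of_hasDerivAt (fun x hx => (hsub (hcr hx)).1.hasDerivAt)
      (ContinuousOn.intervalIntegrable fun x hx => (hsub (hcr hx)).2.1.continuousWithinAt)]
    ring
  refine ⟨f c + ∫ x in c..b, deriv f x, ?_⟩
  have hlim := tendsto_intervalIntegral_nhdsLT hcb
    (fun x hx => (hsub (hsub' hx)).2.1.continuousWithinAt) fun x hx => (hsub (hsub' hx)).2.2
  refine (tendsto_const_nhds.add hlim).congr' ?_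
  filter_upwards [Ioo_mem_nhdsLT hcb] with r hr
  exact (hftc r hr).symm

/- `-f` is compared with the barrier `K (x - a) - hi`; it can only touch the barrier where `f` lies
in the band `[lo, hi]`. -/
theorem sub_mul_le_of_neg_lt_deriv_of_mem_Icc {f : ℝ → ℝ} {a b lo hi K : ℝ}
    (hab : a ≤ b) (hK : 0 ≤ K) (hf : ContinuousOn f (Icc a b))
    (hd : ∀ x ∈ Ico a b, DifferentiableAt ℝ f x)
    (hband : ∀ x ∈ Ico a b, f x ∈ Icc lo hi → -K < deriv f x)
    (ha : hi ≤ f a) (hlo : lo ≤ hi - K * (b - a)) :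
    hi - K * (b - a) ≤ f b := by
  have key := image_le_of_deriv_right_lt_deriv_boundary' (f := fun x => -f x)
    (f' := fun x => -deriv f x) (B := fun x => K * (x - a) - hi) (B' := fun _ => K) hf.neg
    (fun x hx => (hd x hx).hasDerivAt.neg.hasDerivWithinAt) (by simpa using ha)
    (by fun_prop)
    (fun x _ => by simpa using (((hasDerivAt_id x).sub_const a).const_mul K).sub_const hi
      |>.hasDerivWithinAt)
    (fun x hx hfx => by
      have hx' : f x ∈ Icc lo hi := by
        constructor <;> nlinarith [hx.1, hx.2]
      linarith [hband x hx hx'])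
    (right_mem_Icc.2 hab)
  linarith

theorem eventually_ge_of_frequently_ge_of_abs_deriv_le {f : ℝ → ℝ} {b lo hi C : ℝ}
    (hlohi : lo < hi) (hd : ∀ᶠ x in 𝓝[<] b, DifferentiableAt ℝ f x)
    (hC : ∀ᶠ x in 𝓝[<] b, f x ∈ Icc lo hi → |deriv f x| ≤ C)
    (hfreq : ∃ᶠ x in 𝓝[<] b, hi ≤ f x) :
    ∀ᶠ x in 𝓝[<] b, lo ≤ f x := by
  obtain ⟨l, hlb, hsub⟩ := mem_nhdsLT_iff_exists_Ioo_subset.1 (hd.and hC)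
  set K := max C 0 + 1
  have hK : 0 < K := by positivity
  set l' := max l (b - (hi - lo) / K)
  have hl'b : l' < b := max_lt hlb (by linarith [div_pos (sub_pos.2 hlohi) hK])
  by_contra hnot
  obtain ⟨r₁, hr₁, hr₁l', hr₁b⟩ := (hfreq.and_eventually (Ioo_mem_nhdsLT hl'b)).exists
  obtain ⟨r₂, hr₂, hr₁r₂, hr₂b⟩ :=
    ((not_eventually.1 hnot).and_eventually (Ioo_mem_nhdsLT hr₁b)).exists
  have hmem : ∀ x ∈ Icc r₁ r₂, x ∈ Ioo l b := fun x hx =>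
    ⟨(le_max_left _ _).trans_lt (hr₁l'.trans_le hx.1), hx.2.trans_lt hr₂b⟩
  have hlen : K * (r₂ - r₁) ≤ hi - lo := by
    have : r₂ - r₁ ≤ (hi - lo) / K := by linarith [le_max_right l (b - (hi - lo) / K)]
    rwa [le_div_iff₀' hK] at this
  have := sub_mul_le_of_neg_lt_deriv_of_mem_Icc hr₁r₂.le hK.le
    (fun x hx => (hsub (hmem x hx)).1.continuousAt.continuousWithinAt)
    (fun x hx => (hsub (hmem x (Ico_subset_Icc_self hx))).1)
    (fun x hx hfx => by
      have := (hsub (hmem x (Ico_subset_Icc_self hx))).2 hfx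
      linarith [neg_abs_le (deriv f x), le_max_left C 0])
    hr₁ (by linarith)
  exact hr₂ (by linarith)

theorem continuousOn_if_lt {f g : ℝ → ℝ} {a b c : ℝ} (hf : ContinuousOn f (Ico a b))
    (hg : ContinuousOn g (Ico b c)) (hfg : Tendsto f (𝓝[<] b) (𝓝 (g b))) :
    ContinuousOn (fun x => if x < b then f x else g x) (Ico a c) := by
  intro x hx
  rcases lt_trichotomy x b with hxb | rfl | hbx
  · have hf' : ContinuousWithinAt f (Ico a c) x :=
      (hf x ⟨hx.1, hxb⟩).mono_of_mem_nhdsWithin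
        (mem_nhdsWithin.2 ⟨Iio b, isOpen_Iio, hxb, fun y hy => ⟨hy.2.1, hy.1⟩⟩)
    refine hf'.congr_of_eventuallyEq ?_ (if_pos hxb)
    filter_upwards [nhdsWithin_le_nhds (Iio_mem_nhds hxb)] with y hy using if_pos hy
  · have hleft : ContinuousWithinAt (fun y => if y < x then f y else g y) (Iio x) x := by
      rw [ContinuousWithinAt, if_neg (lt_irrefl x)]
      exact hfg.congr' (eventually_nhdsWithin_of_forall fun y hy => (if_pos hy).symm)
    have hright : ContinuousWithinAt (fun y => if y < x then f y else g y) (Ico x c) x :=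
      (hg x ⟨le_rfl, hx.2⟩).congr (fun y hy => if_neg (not_lt.2 hy.1)) (if_neg (lt_irrefl x))
    exact (hleft.union hright).mono fun y hy => (lt_or_ge y x).imp id fun h => ⟨h, hy.2⟩
  · have hg' : ContinuousWithinAt g (Ico a c) x :=
      (hg x ⟨hbx.le, hx.2⟩).mono_of_mem_nhdsWithin
        (mem_nhdsWithin.2 ⟨Ioi b, isOpen_Ioi, hbx, fun y hy => ⟨hy.1.le, hy.2.2⟩⟩)
    refine hg'.congr_of_eventuallyEq ?_ (if_neg hbx.not_gt)
    filter_upwards [nhdsWithin_le_nhds (Ioi_mem_nhds hbx)] with y hy using if_neg (not_lt.2 hy.le)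

theorem hasDerivAt_of_eventually_hasDerivAt_of_ne {E : Type*} [NormedAddCommGroup E]
    [NormedSpace ℝ E] {f g : ℝ → E} {x : ℝ} (hd : ∀ᶠ y in 𝓝[≠] x, HasDerivAt f (g y) y)
    (hf : ContinuousAt f x) (hg : ContinuousAt g x) : HasDerivAt f (g x) x := by
  have hs : DifferentiableOn ℝ f {y | HasDerivAt f (g y) y} := fun y hy =>
    hy.differentiableAt.differentiableWithinAt
  have hderiv : ∀ l ≤ 𝓝[≠] x, Tendsto (deriv f) l (𝓝 (g x)) := fun l hl =>
    (hg.tendsto.mono_left (hl.trans nhdsWithin_le_nhds)).congr'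
      ((hd.filter_mono hl).mono fun y hy => hy.deriv.symm)
  have hLT : 𝓝[<] x ≤ 𝓝[≠] x := nhdsWithin_mono x fun y hy => ne_of_lt hy
  have hGT : 𝓝[>] x ≤ 𝓝[≠] x := nhdsWithin_mono x fun y hy => ne_of_gt hy
  have hleft := hasDerivWithinAt_Iic_of_tendsto_deriv hs hf.continuousWithinAt (hLT hd)
    (hderiv _ hLT)
  have hright := hasDerivWithinAt_Ici_of_tendsto_deriv hs hf.continuousWithinAt (hGT hd)
    (hderiv _ hGT)
  simpa using hleft.union hright

/- Time is adjoined as a coordinate moving at unit speed, which reduces this to the autonomous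
existence theorem. -/
theorem exists_hasDerivAt_of_contDiffAt {E : Type*} [NormedAddCommGroup E] [NormedSpace ℝ E]
    [CompleteSpace E] {f : ℝ × E → E} {t₀ : ℝ} {x₀ : E} (hf : ContDiffAt ℝ 1 f (t₀, x₀)) :
    ∃ α : ℝ → E, α t₀ = x₀ ∧ ∃ ε > 0, ∀ t ∈ Ioo (t₀ - ε) (t₀ + ε),
      HasDerivAt α (f (t, α t)) t := by
  obtain ⟨α, hα₀, ε, hε, hα⟩ := (contDiffAt_const (c := (1 : ℝ)).prodMk hf
    |>.exists_forall_mem_closedBall_exists_eq_forall_mem_Ioo_hasDerivAt₀ t₀)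
  have hfst : ∀ t ∈ Ioo (t₀ - ε) (t₀ + ε), HasDerivAt (fun t => (α t).1) 1 t := fun t ht =>
    (ContinuousLinearMap.fst ℝ ℝ E).hasFDerivAt.comp_hasDerivAt t (hα t ht)
  have htime : EqOn (fun t => (α t).1) id (Ioo (t₀ - ε) (t₀ + ε)) :=
    isOpen_Ioo.eqOn_of_deriv_eq isPreconnected_Ioo
      (fun t ht => (hfst t ht).differentiableAt.differentiableWithinAt) differentiableOn_id
      (fun t ht => by simp [(hfst t ht).deriv]) (x := t₀) ⟨by linarith, by linarith⟩
      (by simp [hα₀])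
  refine ⟨fun t => (α t).2, by simp [hα₀], ε, hε, fun t ht => ?_⟩
  have hsnd := (ContinuousLinearMap.snd ℝ ℝ E).hasFDerivAt.comp_hasDerivAt t (hα t ht)
  have hαt : α t = (t, (α t).2) := Prod.ext (htime ht) rfl
  rw [hαt] at hsnd
  exact hsnd

theorem contDiffAt_Bfun {n : WithTop ℕ∞} (β : ℝ) {y : ℝ} (hy : 0 < y) :
    ContDiffAt ℝ n (Bfun β) y := by
  unfold Bfun
  split_ifs
  · exact contDiffAt_id.mul ((contDiffAt_id.sub (Real.contDiffAt_log.2 hy.ne')).sub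
      contDiffAt_const)
  · exact ((contDiffAt_id.add (contDiffAt_const.mul (contDiffAt_rpow_const_of_ne hy.ne'))).sub
      (contDiffAt_const.mul (contDiffAt_rpow_const_of_ne hy.ne'))).div_const _

theorem contDiffAt_polyRHS {n : WithTop ℕ∞} (γ β θ : ℝ) {x : ℝ × ℝ × ℝ} (hd : 0 < x.1)
    (he : 0 < x.2.1) (hr : x.2.2 ≠ 0) :
    ContDiffAt ℝ n (fun x : ℝ × ℝ × ℝ => polyRHS γ β θ x.1 x.2.1 x.2.2) x := by
  have hd' : ContDiffAt ℝ n (fun x : ℝ × ℝ × ℝ => x.1) x := contDiffAt_fst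
  have he' : ContDiffAt ℝ n (fun x : ℝ × ℝ × ℝ => x.2.1) x := contDiffAt_snd.fst
  have hr' : ContDiffAt ℝ n (fun x : ℝ × ℝ × ℝ => x.2.2) x := contDiffAt_snd.snd
  have hq := hd'.div he' he.ne'
  have hq0 : 0 < x.1 / x.2.1 := div_pos hd he
  unfold polyRHS
  exact ((contDiffAt_rpow_const_of_ne hq0.ne').comp x hq).mul
    ((((contDiffAt_const.mul ((contDiffAt_Bfun β hq0).comp x hq)).mul he').div hr' hr).sub
      (((contDiffAt_const.mul hr').mul ((contDiffAt_rpow_const_of_ne he.ne').comp x he')).mul hd'))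

theorem exists_abs_polyRHS_le (γ β θ : ℝ) {m M r₁ r₂ : ℝ} (hm : 0 < m) (hr₁ : 0 < r₁) :
    ∃ C, ∀ d ∈ Icc m M, ∀ e ∈ Icc m M, ∀ r ∈ Icc r₁ r₂, |polyRHS γ β θ d e r| ≤ C := by
  have hK : IsCompact (Icc m M ×ˢ Icc m M ×ˢ Icc r₁ r₂) :=
    isCompact_Icc.prod (isCompact_Icc.prod isCompact_Icc)
  obtain ⟨C, hC⟩ := hK.exists_bound_of_continuousOn (f := fun x : ℝ × ℝ × ℝ =>
    polyRHS γ β θ x.1 x.2.1 x.2.2) fun x hx =>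
    (contDiffAt_polyRHS (n := 0) γ β θ (hm.trans_le hx.1.1) (hm.trans_le hx.2.1.1)
      (hr₁.trans_le hx.2.2.1).ne').continuousAt.continuousWithinAt
  exact ⟨C, fun d hd e he r hr => hC (d, e, r) ⟨hd, he, hr⟩⟩

theorem integral_mul_sq_pos {δ : ℝ → ℝ} {r : ℝ} (hr : 0 < r)
    (hint : IntervalIntegrable (fun s => δ s * s ^ 2) volume 0 r)
    (hpos : ∀ s ∈ Ioo 0 r, 0 < δ s) : 0 < ∫ s in (0 : ℝ)..r, δ s * s ^ 2 :=
  intervalIntegral.intervalIntegral_pos_of_pos_on hint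
    (fun s hs => mul_pos (hpos s hs) (pow_pos hs.1 2)) hr

theorem hasDerivAt_integral_mul_sq {δ : ℝ → ℝ} {R r : ℝ} (hc : ContinuousOn δ (Ico 0 R))
    (hr : r ∈ Ioo 0 R) : HasDerivAt (fun r => ∫ s in (0 : ℝ)..r, δ s * s ^ 2) (δ r * r ^ 2) r :=
  hasDerivAt_integral_of_continuousOn_Ico (hc.mul (continuous_pow 2).continuousOn) hr

theorem continuousAt_polyRHS_polyEta (γ β θ : ℝ) {δ : ℝ → ℝ} {R r : ℝ}
    (hc : ContinuousOn δ (Ico 0 R)) (hpos : ∀ s ∈ Ico 0 R, 0 < δ s) (hr : r ∈ Ioo 0 R) :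
    ContinuousAt (fun r => polyRHS γ β θ (δ r) (polyEta δ r) r) r := by
  have hδ : ContinuousAt δ r := hc.continuousAt (Ico_mem_nhds hr.1 hr.2)
  have hη : ContinuousAt (polyEta δ) r :=
    (continuousAt_const.div (continuousAt_pow r 3) (pow_pos hr.1 3).ne').mul
      (hasDerivAt_integral_mul_sq hc hr).continuousAt
  have hηpos : 0 < polyEta δ r := by
    refine mul_pos (by have := hr.1; positivity) (integral_mul_sq_pos hr.1
      (ContinuousOn.intervalIntegrable ?_) fun s hs => hpos s ⟨hs.1.le, hs.2.trans hr.2⟩)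
    rw [uIcc_of_le hr.1.le]
    exact (hc.mono (Icc_subset_Ico_right hr.2)).mul (continuous_pow 2).continuousOn
  exact (contDiffAt_polyRHS (n := 0) γ β θ (x := (δ r, polyEta δ r, r)) (hpos r ⟨hr.1.le, hr.2⟩)
    hηpos hr.1.ne').continuousAt.comp (x := r) (hδ.prodMk (hη.prodMk continuousAt_id))

theorem isRegularPoly_of_hasDerivAt {γ β θ R : ℝ} {δ : ℝ → ℝ} (hc : ContinuousOn δ (Ico 0 R))
    (hpos : ∀ r ∈ Ico 0 R, 0 < δ r)
    (hd : ∀ r ∈ Ioo 0 R, HasDerivAt δ (polyRHS γ β θ (δ r) (polyEta δ r) r) r) :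
    IsRegularPoly γ β θ R δ (fun r => if r = 0 then δ 0 else polyEta δ r) := by
  refine ⟨hc, fun r hr => (hd r hr).differentiableAt, ?_, hpos, if_pos rfl,
    fun r hr => if_neg hr.1.ne', fun r hr => by simp only [(hd r hr).deriv, if_neg hr.1.ne']⟩
  exact fun r hr => (continuousAt_polyRHS_polyEta γ β θ hc hpos hr).continuousWithinAt.congr
    (fun s hs => (hd s hs).deriv) (hd r hr).deriv

theorem exists_hasDerivAt_polySystem (γ β θ : ℝ) {R L M : ℝ} (hR : 0 < R) (hL : 0 < L)
    (hM : 0 < M) :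
    ∃ p q : ℝ → ℝ, p R = L ∧ q R = M ∧ ∃ ε > 0, ∀ t ∈ Ioo (R - ε) (R + ε),
      HasDerivAt p (polyRHS γ β θ (p t) (3 * q t / t ^ 3) t) t ∧ HasDerivAt q (p t * t ^ 2) t := by
  have hf : ContDiffAt ℝ 1 (fun z : ℝ × ℝ × ℝ =>
      (polyRHS γ β θ z.2.1 (3 * z.2.2 / z.1 ^ 3) z.1, z.2.1 * z.1 ^ 2)) (R, L, M) := by
    have hcoord : ContDiffAt ℝ 1 (fun z : ℝ × ℝ × ℝ => (z.2.1, 3 * z.2.2 / z.1 ^ 3, z.1))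
        (R, L, M) :=
      contDiffAt_snd.fst.prodMk (((contDiffAt_const.mul contDiffAt_snd.snd).div
        (contDiffAt_fst.pow 3) (by positivity)).prodMk contDiffAt_fst)
    exact ((contDiffAt_polyRHS γ β θ (x := (L, 3 * M / R ^ 3, R)) hL (by positivity)
      hR.ne').comp (R, L, M) hcoord).prodMk (contDiffAt_snd.fst.mul (contDiffAt_fst.pow 2))
  obtain ⟨α, hα₀, ε, hε, hα⟩ := exists_hasDerivAt_of_contDiffAt hf
  refine ⟨fun t => (α t).1, fun t => (α t).2, by simp [hα₀], by simp [hα₀], ε, hε,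
    fun t ht => ⟨?_, ?_⟩⟩
  · exact (ContinuousLinearMap.fst ℝ ℝ ℝ).hasFDerivAt.comp_hasDerivAt t (hα t ht)
  · exact (ContinuousLinearMap.snd ℝ ℝ ℝ).hasFDerivAt.comp_hasDerivAt t (hα t ht)

theorem integral_mul_sq_eq_of_hasDerivAt {δ q : ℝ → ℝ} {R u : ℝ} (hR : 0 < R)
    (hc : ContinuousOn δ (Ico 0 u)) (hq : ∀ t ∈ Ico R u, HasDerivAt q (δ t * t ^ 2) t)
    (hqR : ∫ s in (0 : ℝ)..R, δ s * s ^ 2 = q R) :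
    ∀ r ∈ Ico R u, ∫ s in (0 : ℝ)..r, δ s * s ^ 2 = q r := by
  intro r hr
  have hmem : ∀ x ∈ Icc R r, x ∈ Ioo 0 u := fun x hx => ⟨hR.trans_le hx.1, hx.2.trans_lt hr.2⟩
  have hmem' : ∀ x ∈ Icc R r, x ∈ Ico R u := fun x hx => ⟨hx.1, hx.2.trans_lt hr.2⟩
  exact eq_of_has_deriv_right_eq
    (fun x hx => (hasDerivAt_integral_mul_sq hc (hmem x (Ico_subset_Icc_self hx))).hasDerivWithinAt)
    (fun x hx => (hq x (hmem' x (Ico_subset_Icc_self hx))).hasDerivWithinAt)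
    (fun x hx => (hasDerivAt_integral_mul_sq hc (hmem x hx)).continuousAt.continuousWithinAt)
    (fun x hx => (hq x (hmem' x hx)).continuousAt.continuousWithinAt) hqR r ⟨hr.1, le_rfl⟩

def IsRegularPolyExtendable (γ β θ R : ℝ) (δ : ℝ → ℝ) : Prop :=
  ∃ R' > R, ∃ δ' η' : ℝ → ℝ, IsRegularPoly γ β θ R' δ' η' ∧ ∀ r ∈ Ico 0 R, δ' r = δ r

theorem IsRegularPoly.extendable_of_glue {γ β θ R u : ℝ} {δ η p q : ℝ → ℝ}
    (hreg : IsRegularPoly γ β θ R δ η) (hR : 0 < R) (hRu : R < u)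
    (hpq : ∀ t ∈ Ico R u, 0 < p t ∧ HasDerivAt p (polyRHS γ β θ (p t) (3 * q t / t ^ 3) t) t ∧
      HasDerivAt q (p t * t ^ 2) t)
    (hδp : Tendsto δ (𝓝[<] R) (𝓝 (p R)))
    (hqR : ∫ s in (0 : ℝ)..R, (if s < R then δ s else p s) * s ^ 2 = q R) :
    IsRegularPolyExtendable γ β θ R δ := by
  obtain ⟨hδc, hδd, -, hδpos, -, hη, hode⟩ := hreg
  set δ' : ℝ → ℝ := fun r => if r < R then δ r else p r
  have hδ'c : ContinuousOn δ' (Ico 0 u) := continuousOn_if_lt hδc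
    (fun t ht => (hpq t ht).2.1.continuousAt.continuousWithinAt) hδp
  have hδ'pos : ∀ r ∈ Ico 0 u, 0 < δ' r := by
    intro r hr
    simp only [δ']
    split_ifs with h
    exacts [hδpos r ⟨hr.1, h⟩, (hpq r ⟨not_lt.1 h, hr.2⟩).1]
  have hmass := integral_mul_sq_eq_of_hasDerivAt hR hδ'c (fun t ht => by
    simpa only [δ', if_neg (not_lt.2 ht.1)] using (hpq t ht).2.2) hqR
  have hoff : ∀ r ∈ Ioo 0 u, r ≠ R →
      HasDerivAt δ' (polyRHS γ β θ (δ' r) (polyEta δ' r) r) r := by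
    intro r hr hrR
    rcases hrR.lt_or_gt with h | h
    · have hev : δ' =ᶠ[𝓝 r] δ := by
        filter_upwards [Iio_mem_nhds h] with s hs using if_pos hs
      have hηr : polyEta δ' r = η r := by
        rw [hη r ⟨hr.1, h⟩, polyEta, polyEta,
          intervalIntegral.integral_congr fun s hs => ?_]
        rw [uIcc_of_le hr.1.le] at hs
        simp only [δ', if_pos (hs.2.trans_lt h)]
      rw [hηr, show δ' r = δ r from if_pos h, ← hode r ⟨hr.1, h⟩]
      exact (hδd r ⟨hr.1, h⟩).hasDerivAt.congr_of_eventuallyEq hev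
    · have hev : δ' =ᶠ[𝓝 r] p := by
        filter_upwards [Ioi_mem_nhds h] with s hs using if_neg (not_lt.2 hs.le)
      have hηr : polyEta δ' r = 3 * q r / r ^ 3 := by
        rw [polyEta, hmass r ⟨h.le, hr.2⟩]
        ring
      rw [hηr, show δ' r = p r from if_neg (not_lt.2 h.le)]
      exact (hpq r ⟨h.le, hr.2⟩).2.1.congr_of_eventuallyEq hev
  refine ⟨u, hRu, δ', _, isRegularPoly_of_hasDerivAt hδ'c hδ'pos fun r hr => ?_,
    fun r hr => if_pos hr.2⟩
  rcases ne_or_eq r R with hrR | rfl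
  · exact hoff r hr hrR
  · refine hasDerivAt_of_eventually_hasDerivAt_of_ne
      (g := fun r => polyRHS γ β θ (δ' r) (polyEta δ' r) r) ?_
      (hδ'c.continuousAt (Ico_mem_nhds hr.1 hr.2))
      (continuousAt_polyRHS_polyEta γ β θ hδ'c hδ'pos hr)
    filter_upwards [self_mem_nhdsWithin, nhdsWithin_le_nhds (Ioo_mem_nhds hr.1 hr.2)]
      with s hs hs'
    exact hoff s hs' hs

theorem IsRegularPoly.extendable_of_tendsto_pos {γ β θ R L : ℝ} {δ η : ℝ → ℝ}
    (hreg : IsRegularPoly γ β θ R δ η) (hR : 0 < R) (hL : 0 < L)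
    (hδL : Tendsto δ (𝓝[<] R) (𝓝 L)) : IsRegularPolyExtendable γ β θ R δ := by
  obtain ⟨hδc, -, -, hδpos, -⟩ := id hreg
  -- the mass of `δL`, the continuous extension of `δ` by `L`, is the initial mass at `R`
  set δL : ℝ → ℝ := fun r => if r < R then δ r else L
  have hM : 0 < ∫ s in (0 : ℝ)..R, δL s * s ^ 2 := by
    refine integral_mul_sq_pos hR (ContinuousOn.intervalIntegrable ?_) fun s hs => ?_
    · rw [uIcc_of_le hR.le]
      exact ((continuousOn_if_lt hδc continuousOn_const hδL).mono
        (Icc_subset_Ico_right (lt_add_one R))).mul (continuous_pow 2).continuousOn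
    · exact (if_pos hs.2).trans_gt (hδpos s ⟨hs.1.le, hs.2⟩)
  obtain ⟨p, q, hpR, hqR, ε, hε, hpq⟩ := exists_hasDerivAt_polySystem γ β θ hR hL hM
  obtain ⟨u, hRu, hu⟩ : ∃ u > R, ∀ t ∈ Ico R u, t ∈ Ioo (R - ε) (R + ε) ∧ 0 < p t := by
    have hpc : ContinuousAt p R := (hpq R ⟨by linarith, by linarith⟩).1.continuousAt
    have hev : ∀ᶠ t in 𝓝 R, t ∈ Ioo (R - ε) (R + ε) ∧ 0 < p t :=
      Filter.Eventually.and (Ioo_mem_nhds (by linarith) (by linarith))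
        (hpc.eventually (lt_mem_nhds (hpR ▸ hL)))
    exact mem_nhdsGE_iff_exists_Ico_subset.1 (nhdsWithin_le_nhds hev)
  refine hreg.extendable_of_glue hR hRu (fun t ht => ⟨(hu t ht).2, hpq t (hu t ht).1⟩)
    (hpR ▸ hδL) (hqR ▸ intervalIntegral.integral_congr fun s hs => ?_)
  rw [uIcc_of_le hR.le] at hs
  rcases hs.2.lt_or_eq with h | rfl
  · simp only [δL, if_pos h]
  · simp only [δL, lt_irrefl, if_false, hpR]

theorem IsRegularPoly.exists_tendsto_of_frequently_ge {γ β θ R δc a : ℝ} {δ η : ℝ → ℝ}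
    (hreg : IsRegularPoly γ β θ R δ η) (hR : 0 < R) (ha : 0 < a)
    (hband : ∀ r ∈ Ioo 0 R, δ r < η r ∧ η r ≤ δc) (hfreq : ∃ᶠ r in 𝓝[<] R, a ≤ δ r) :
    ∃ L > 0, Tendsto δ (𝓝[<] R) (𝓝 L) := by
  obtain ⟨-, hδd, hδ'c, -, -, -, hode⟩ := hreg
  have hnear : ∀ᶠ r in 𝓝[<] R, r ∈ Ioo 0 R ∧ R / 2 ≤ r :=
    Filter.Eventually.mono (Ioo_mem_nhdsLT (half_lt_self hR)) fun r hr =>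
      ⟨⟨(half_pos hR).trans hr.1, hr.2⟩, hr.1.le⟩
  obtain ⟨C, hC⟩ := exists_abs_polyRHS_le γ β θ (M := δc) (r₂ := R) (half_pos ha) (half_pos hR)
  have hderiv : ∀ᶠ r in 𝓝[<] R, a / 2 ≤ δ r → |deriv δ r| ≤ C := by
    filter_upwards [hnear] with r ⟨hr, hr2⟩ hδr
    obtain ⟨hδη, hηc⟩ := hband r hr
    rw [hode r hr]
    exact hC _ ⟨hδr, hδη.le.trans hηc⟩ _ ⟨hδr.trans hδη.le, hηc⟩ _ ⟨hr2, hr.2.le⟩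
  have hdiff : ∀ᶠ r in 𝓝[<] R, DifferentiableAt ℝ δ r := hnear.mono fun r hr => hδd r hr.1
  have hge : ∀ᶠ r in 𝓝[<] R, a / 2 ≤ δ r :=
    eventually_ge_of_frequently_ge_of_abs_deriv_le (half_lt_self ha) hdiff
      (hderiv.mono fun r hr hδr => hr hδr.1) hfreq
  obtain ⟨L, hL⟩ := exists_tendsto_nhdsLT_of_abs_deriv_le hdiff
    (hnear.mono fun r hr => hδ'c.continuousAt (Ioo_mem_nhds hr.1.1 hr.1.2))
    ((hderiv.and hge).mono fun r hr => hr.1 hr.2)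
  exact ⟨L, (half_pos ha).trans_le (ge_of_tendsto hL hge), hL⟩

theorem IsRegularPoly.tendsto_zero_of_not_extendable {γ β θ R δc : ℝ} {δ η : ℝ → ℝ}
    (hreg : IsRegularPoly γ β θ R δ η) (hR : 0 < R)
    (hband : ∀ r ∈ Ioo 0 R, δ r < η r ∧ η r ≤ δc)
    (hmax : ¬ IsRegularPolyExtendable γ β θ R δ) : Tendsto δ (𝓝[<] R) (𝓝 0) := by
  obtain ⟨-, -, -, hδpos, -⟩ := id hreg
  by_contra hnot
  obtain ⟨a, ha, hfreq⟩ : ∃ a > 0, ∃ᶠ r in 𝓝[<] R, a ≤ δ r := by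
    by_contra! h
    refine hnot (tendsto_order.2 ⟨fun a ha => ?_, fun a ha => (h a ha).mono fun r hr => hr⟩)
    filter_upwards [Ioo_mem_nhdsLT hR] with r hr
    exact ha.trans (hδpos r ⟨hr.1.le, hr.2⟩)
  obtain ⟨L, hL, hδL⟩ := hreg.exists_tendsto_of_frequently_ge hR ha hband hfreq
  exact hmax (hreg.extendable_of_tendsto_pos hR hL hδL)

theorem IsRegularPoly.polyEta_pos_and_tendsto {γ β θ R δc : ℝ} {δ η : ℝ → ℝ}
    (hreg : IsRegularPoly γ β θ R δ η) (hR : 0 < R) (hδle : ∀ r ∈ Ioo 0 R, δ r ≤ δc) :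
    0 < polyEta δ R ∧ Tendsto η (𝓝[<] R) (𝓝 (polyEta δ R)) := by
  obtain ⟨hδc, -, -, hδpos, -, hη, -⟩ := hreg
  have hgc : ContinuousOn (fun s => δ s * s ^ 2) (Ioo 0 R) :=
    (hδc.mono Ioo_subset_Ico_self).mul (continuous_pow 2).continuousOn
  have hgC : ∀ s ∈ Ioo 0 R, |δ s * s ^ 2| ≤ δc * R ^ 2 := by
    intro s hs
    have hδs := hδpos s ⟨hs.1.le, hs.2⟩
    rw [abs_of_pos (mul_pos hδs (pow_pos hs.1 2))]
    exact mul_le_mul (hδle s hs) (pow_le_pow_left₀ hs.1.le hs.2.le 2) (sq_nonneg s)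
      (hδs.le.trans (hδle s hs))
  refine ⟨mul_pos (by positivity) (integral_mul_sq_pos hR ?_ fun s hs => hδpos s ⟨hs.1.le, hs.2⟩),
    ?_⟩
  · exact (intervalIntegrable_iff_integrableOn_Icc_of_le hR.le).2
      (integrableOn_Icc_of_continuousOn_Ioo_of_abs_le hgc hgC)
  · have h3 : Tendsto (fun r : ℝ => 3 / r ^ 3) (𝓝[<] R) (𝓝 (3 / R ^ 3)) :=
      ((continuousAt_const.div (continuousAt_pow R 3) (by positivity)).tendsto).mono_left
        nhdsWithin_le_nhds
    refine (h3.mul (tendsto_intervalIntegral_nhdsLT hR hgc hgC)).congr' ?_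
    filter_upwards [Ioo_mem_nhdsLT hR] with r hr
    rw [hη r hr, polyEta]

theorem regularPoly_limits_at_finite_Rmax_general (γ β θ δc R : ℝ) (hR : 0 < R)
    (δ η : ℝ → ℝ) (hreg : IsRegularPoly γ β θ R δ η)
    (hbound : ∀ r ∈ Ioo 0 R, 0 < δ r ∧ δ r < η r ∧ η r ≤ δc ∧ deriv η r < 0)
    (hmax : ¬ ∃ R' > R, ∃ δ' η' : ℝ → ℝ, IsRegularPoly γ β θ R' δ' η' ∧
      ∀ r ∈ Ico 0 R, δ' r = δ r) :
    Tendsto δ (𝓝[<] R) (𝓝 0) ∧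
    0 < polyEta δ R ∧
    Tendsto η (𝓝[<] R) (𝓝 (polyEta δ R)) := by
  have hband : ∀ r ∈ Ioo 0 R, δ r < η r ∧ η r ≤ δc := fun r hr =>
    ⟨(hbound r hr).2.1, (hbound r hr).2.2.1⟩
  exact ⟨hreg.tendsto_zero_of_not_extendable hR hband hmax,
    hreg.polyEta_pos_and_tendsto hR fun r hr => ((hband r hr).1.trans_le (hband r hr).2).le⟩

/-- At a finite maximal radius `R` of a regular solution of the polytropic static
system (with `0 < δ < η ≤ δ_c` and `η' < 0` on `(0,R)`), one has `δ(r) → 0` and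
`η(r) → (3/R³)∫₀ᴿ δ(s)s² ds > 0` as `r → R⁻`. -/
theorem regularPoly_limits_at_finite_Rmax (γ β θ δc R : ℝ) (hβ0 : β ≠ 0)
    (hθ : 0 < θ) (hδc : 0 < δc) (hR : 0 < R)
    (δ η : ℝ → ℝ) (hreg : IsRegularPoly γ β θ R δ η)
    (h0 : δ 0 = δc) (h0' : η 0 = δc)
    (hbound : ∀ r ∈ Ioo 0 R, 0 < δ r ∧ δ r < η r ∧ η r ≤ δc ∧ deriv η r < 0)
    (hmax : ¬ ∃ R' > R, ∃ δ' η' : ℝ → ℝ, IsRegularPoly γ β θ R' δ' η' ∧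
      ∀ r ∈ Ico 0 R, δ' r = δ r) :
    Tendsto δ (𝓝[<] R) (𝓝 0) ∧
    0 < polyEta δ R ∧
    Tendsto η (𝓝[<] R) (𝓝 (polyEta δ R)) :=
  regularPoly_limits_at_finite_Rmax_general γ β θ δc R hR δ η hreg hbound hmax
end
end

section
/- Let γ∈ℝ, β≠0, θ>0 and δ_c>0. Suppose (δ,η) is a regular solution of the polytropic static system on [0,∞) with δ(0)=η(0)=δ_c, satisfying 0<δ(r)<η(r) and η'(r)<0 for all r>0. Then lim_{r→∞}δ(r)=0 and lim_{r→∞}η(r)=0. -/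
open Real Set Filter Topology

noncomputable section

/-!
Since `η' = 3(δ - η)/r < 0`, `η` decreases to some `L ≥ 0`, and `0 < δ < η` then gives both
limits once `L = 0`. If `L > 0`, then for large `r` with `δ(r) ≥ L/2` the term
`θ r η^{2-γ} δ (δ/η)^{1-β}` grows linearly in `r`, while the other term of the equation is
`O(1/r)`, so `δ'(r) ≤ -1`. Hence `δ` eventually falls below `L/2` and can never cross `L/2`
upwards again; from then on `η' ≤ -3L/(2r)`, so `η` decreases like `-(3L/2) log r`,
contradicting `η ≥ L`.
-/

lemma hasDerivAt_polyEta {δ : ℝ → ℝ} (hδ : ContinuousOn δ (Ici 0)) {r : ℝ} (hr : 0 < r) :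
    HasDerivAt (polyEta δ) (3 * (δ r - polyEta δ r) / r) r := by
  have hcont : ContinuousOn (fun s => δ s * s ^ 2) (Ici 0) :=
    hδ.mul (continuous_pow 2).continuousOn
  have hint : HasDerivAt (fun x => ∫ s in (0:ℝ)..x, δ s * s ^ 2) (δ r * r ^ 2) r :=
    intervalIntegral.integral_hasDerivAt_right
      (hcont.mono (by simp [uIcc_of_le hr.le, Icc_subset_Ici_self])).intervalIntegrable
      ((hcont.mono Ioi_subset_Ici_self).stronglyMeasurableAtFilter isOpen_Ioi r hr)
      (hcont.continuousAt (Ici_mem_nhds hr))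
  have hpow : HasDerivAt (fun x : ℝ => 3 / x ^ 3) (-9 / r ^ 4) r :=
    ((hasDerivAt_const r (3 : ℝ)).fun_div (hasDerivAt_pow 3 r) (by positivity)).congr_deriv
      (by field_simp; ring)
  refine (hpow.mul hint).congr_deriv ?_
  unfold polyEta
  field_simp
  ring

lemma continuousOn_Bfun (β : ℝ) : ContinuousOn (Bfun β) (Ioi 0) := by
  have hpow (a : ℝ) : ContinuousOn (fun y : ℝ => y ^ a) (Ioi 0) :=
    fun y hy => (continuousAt_rpow_const y a (Or.inl (ne_of_gt hy))).continuousWithinAt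
  unfold Bfun
  split_ifs
  · exact continuousOn_id.mul ((continuousOn_id.sub
      (continuousOn_log.mono fun y hy => ne_of_gt hy)).sub continuousOn_const)
  · exact ((continuousOn_id.add (continuousOn_const.mul (hpow _))).sub
      (continuousOn_const.mul (hpow _))).div_const _

lemma exists_pos_le_rpow_of_mem_Icc (a : ℝ) {m M : ℝ} (hm : 0 < m) (hmM : m ≤ M) :
    ∃ c > 0, ∀ x ∈ Icc m M, c ≤ x ^ a := by
  refine ⟨min (m ^ a) (M ^ a), lt_min (rpow_pos_of_pos hm a)
    (rpow_pos_of_pos (hm.trans_le hmM) a), fun x hx => ?_⟩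
  rcases le_or_gt 0 a with ha | ha
  · exact (min_le_left _ _).trans (rpow_le_rpow hm.le hx.1 ha)
  · exact (min_le_right _ _).trans (rpow_le_rpow_of_nonpos (hm.trans_le hx.1) hx.2 ha.le)

lemma eventually_polyRHS_le_neg_one (γ β : ℝ) {θ m M : ℝ} (hθ : 0 < θ) (hm : 0 < m)
    (hmM : m ≤ M) :
    ∀ᶠ r in atTop, ∀ d e, m ≤ d → d ≤ e → e ≤ M → polyRHS γ β θ d e r ≤ -1 := by
  have hM : 0 < M := hm.trans_le hmM
  have hu₀ : 0 < m / M := div_pos hm hM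
  obtain ⟨K, hK⟩ := isCompact_Icc.exists_bound_of_continuousOn
    (((continuousOn_id.rpow_const fun u hu => Or.inl (ne_of_gt hu)).mul
      (continuousOn_Bfun β)).mono fun u (hu : u ∈ Icc (m / M) 1) => hu₀.trans_le hu.1)
  obtain ⟨ce, hce, hepow⟩ := exists_pos_le_rpow_of_mem_Icc (2 - γ) hm hmM
  obtain ⟨cu, hcu, hupow⟩ :=
    exists_pos_le_rpow_of_mem_Icc (1 - β) hu₀ (div_le_one_of_le₀ hmM hM.le)
  have hdecay : Tendsto (fun r => |3 * (β - γ)| * M * K / r) atTop (𝓝 0) :=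
    tendsto_const_nhds.div_atTop tendsto_id
  filter_upwards [hdecay.eventually (eventually_le_nhds one_pos),
    eventually_ge_atTop (2 / (θ * ce * m * cu)), eventually_gt_atTop 0]
    with r hdecay_r hr hr0 d e hmd hde heM
  have he : 0 < e := hm.trans_le (hmd.trans hde)
  set u := d / e
  have hu : u ∈ Icc (m / M) 1 :=
    ⟨div_le_div₀ (hm.le.trans hmd) hmd he heM, div_le_one_of_le₀ hde he.le⟩
  have hsplit : polyRHS γ β θ d e r = 3 * (β - γ) * e * (u ^ (1 - β) * Bfun β u) / r
      - θ * r * (e ^ (2 - γ) * d * u ^ (1 - β)) := by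
    unfold polyRHS; ring
  have hfirst : 3 * (β - γ) * e * (u ^ (1 - β) * Bfun β u) / r ≤ 1 := by
    refine le_trans (div_le_div_of_nonneg_right ?_ hr0.le) hdecay_r
    calc _ ≤ |3 * (β - γ) * e * (u ^ (1 - β) * Bfun β u)| := le_abs_self _
      _ = |3 * (β - γ)| * e * |u ^ (1 - β) * Bfun β u| := by
        rw [abs_mul, abs_mul, abs_of_pos he]
      _ ≤ |3 * (β - γ)| * M * K := by
        gcongr
        exact hK u hu
  have hsecond : 2 ≤ θ * r * (e ^ (2 - γ) * d * u ^ (1 - β)) := by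
    calc 2 ≤ θ * r * (ce * m * cu) := by
          rw [div_le_iff₀ (by positivity)] at hr
          linarith
      _ ≤ θ * r * (e ^ (2 - γ) * d * u ^ (1 - β)) := by
          have hd : 0 < d := hm.trans_le hmd
          have := hepow e ⟨hmd.trans hde, heM⟩
          have := hupow u hu
          gcongr
  rw [hsplit]
  linarith

lemma eventually_le_of_deriv_le_neg_one {f : ℝ → ℝ} {c : ℝ}
    (hf : ∀ᶠ x in atTop, DifferentiableAt ℝ f x)
    (hf' : ∀ᶠ x in atTop, c ≤ f x → deriv f x ≤ -1) : ∀ᶠ x in atTop, f x ≤ c := by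
  obtain ⟨a, ha⟩ := eventually_atTop.1 (hf.and hf')
  have hcont (b x : ℝ) (hb : a ≤ b) : ContinuousOn f (Icc b x) := fun y hy =>
    (ha y (hb.trans hy.1)).1.continuousAt.continuousWithinAt
  have hderiv (b x : ℝ) (hb : a ≤ b) (hx : b ≤ x) : HasDerivWithinAt f (deriv f x) (Ici x) x :=
    (ha x (hb.trans hx)).1.hasDerivAt.hasDerivWithinAt
  obtain ⟨b, hab, hb⟩ : ∃ b ≥ a, f b ≤ c := by
    by_contra! hgt
    have hfa := hgt a le_rfl
    have hdrop := image_le_of_deriv_right_le_deriv_boundary (hcont a (a + (f a - c)) le_rfl)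
      (fun x hx => hderiv a x le_rfl hx.1) (B := fun x => f a - (x - a)) (B' := fun _ => -1)
      (by simp) (by fun_prop)
      (fun x _ => by
        simpa using (((hasDerivAt_id x).sub_const a).const_sub (f a)).hasDerivWithinAt)
      (fun x hx => (ha x hx.1).2 (hgt x hx.1).le) (x := a + (f a - c)) ⟨by linarith, le_rfl⟩
    linarith [hgt (a + (f a - c)) (by linarith)]
  filter_upwards [eventually_ge_atTop b] with x hx
  exact image_le_of_deriv_right_lt_deriv_boundary (hcont b x hab)
    (fun y hy => hderiv b y hab hy.1) hb (fun _ => hasDerivAt_const _ c)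
    (fun y hy hyc => ((ha y (hab.trans hy.1)).2 hyc.ge).trans_lt (by norm_num)) ⟨hx, le_rfl⟩

lemma tendsto_atBot_of_deriv_le_neg_div {f f' : ℝ → ℝ} {k : ℝ} (hk : 0 < k)
    (hf : ∀ᶠ x in atTop, HasDerivAt f (f' x) x) (hf' : ∀ᶠ x in atTop, f' x ≤ -k / x) :
    Tendsto f atTop atBot := by
  obtain ⟨a, ha⟩ := eventually_atTop.1 ((hf.and hf').and (eventually_gt_atTop 0))
  have hlog (y : ℝ) (hy : a ≤ y) :
      HasDerivAt (fun x => f a + k * log a - k * log x) (-k / y) y := by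
    simpa [div_eq_mul_inv] using
      ((hasDerivAt_log (ha y hy).2.ne').const_mul k).const_sub (f a + k * log a)
  have hle : ∀ x ≥ a, f x ≤ f a + k * log a - k * log x := fun x hx =>
    image_le_of_deriv_right_le_deriv_boundary
      (fun y hy => (ha y hy.1).1.1.continuousAt.continuousWithinAt)
      (fun y hy => (ha y hy.1).1.1.hasDerivWithinAt) (le_of_eq (by ring))
      (fun y hy => (hlog y hy.1).continuousAt.continuousWithinAt)
      (fun y hy => (hlog y hy.1).hasDerivWithinAt) (fun y hy => (ha y hy.1).1.2) ⟨hx, le_rfl⟩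
  refine tendsto_atBot_mono' atTop (eventually_atTop.2 ⟨a, hle⟩) ?_
  exact tendsto_atBot_add_const_left _ _
    (tendsto_neg_atTop_atBot.comp (tendsto_log_atTop.const_mul_atTop hk))

lemma tendsto_nhds_zero_of_antitoneOn {f : ℝ → ℝ} {a : ℝ} (hf : AntitoneOn f (Ioi a))
    (hnonneg : ∀ x > a, 0 ≤ f x) (hsmall : ∀ ε > 0, ∃ x > a, f x < ε) :
    Tendsto f atTop (𝓝 0) := by
  refine tendsto_order.2 ⟨fun ε hε => ?_, fun ε hε => ?_⟩
  · filter_upwards [eventually_gt_atTop a] with x hx using hε.trans_le (hnonneg x hx)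
  · obtain ⟨x₀, hx₀, hfx₀⟩ := hsmall ε hε
    filter_upwards [eventually_ge_atTop x₀] with x hx
    exact (hf hx₀ (hx₀.trans_le hx) hx).trans_lt hfx₀

section
variable {γ β θ : ℝ} {δ η : ℝ → ℝ}

lemma IsRegularPolyGlobal.hasDerivAt_eta (h : IsRegularPolyGlobal γ β θ δ η) {r : ℝ}
    (hr : 0 < r) : HasDerivAt η (3 * (δ r - η r) / r) r := by
  obtain ⟨hδ, -, -, -, -, hηδ, -⟩ := h
  have hη : η =ᶠ[𝓝 r] polyEta δ := eventually_of_mem (Ioi_mem_nhds hr) hηδ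
  rw [hη.eq_of_nhds]
  exact (hasDerivAt_polyEta hδ hr).congr_of_eventuallyEq hη

lemma IsRegularPolyGlobal.exists_eta_lt (hθ : 0 < θ) (h : IsRegularPolyGlobal γ β θ δ η)
    (hδη : ∀ r > 0, δ r < η r) (hanti : AntitoneOn η (Ioi 0)) {L : ℝ} (hL : 0 < L) :
    ∃ r > 0, η r < L := by
  have hη' (r : ℝ) (hr : 0 < r) := h.hasDerivAt_eta hr
  obtain ⟨-, hdiff, -, -, -, -, hode⟩ := h
  by_contra! hLη
  have hδ : ∀ᶠ r in atTop, δ r ≤ L / 2 := by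
    refine eventually_le_of_deriv_le_neg_one
      (eventually_atTop.2 ⟨1, fun r hr => hdiff r (zero_lt_one.trans_le hr)⟩) ?_
    filter_upwards [eventually_polyRHS_le_neg_one γ β hθ (half_pos hL)
      ((half_le_self hL.le).trans (hLη 1 one_pos)), eventually_ge_atTop 1] with r hRHS hr hδr
    have hr0 : (0 : ℝ) < r := by linarith
    rw [hode r hr0]
    exact hRHS _ _ hδr (hδη r hr0).le (hanti (mem_Ioi.2 one_pos) hr0 hr)
  have hη : Tendsto η atTop atBot := by
    refine tendsto_atBot_of_deriv_le_neg_div (half_pos (mul_pos three_pos hL))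
      (eventually_atTop.2 ⟨1, fun r hr => hη' r (zero_lt_one.trans_le hr)⟩) ?_
    filter_upwards [hδ, eventually_gt_atTop 0] with r hδr hr
    rw [div_le_div_iff_of_pos_right hr]
    linarith [hLη r hr]
  obtain ⟨r, hηr, hr⟩ :=
    ((hη.eventually (eventually_lt_atBot L)).and (eventually_gt_atTop 0)).exists
  exact (hLη r hr).not_gt hηr

end

theorem regularPoly_limits_at_infinity_general (γ β θ : ℝ)
    (hθ : 0 < θ)
    (δ η : ℝ → ℝ) (hreg : IsRegularPolyGlobal γ β θ δ η)
    (hbound : ∀ r ∈ Ioi (0:ℝ), 0 < δ r ∧ δ r < η r ∧ deriv η r < 0) :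
    Tendsto δ atTop (𝓝 0) ∧ Tendsto η atTop (𝓝 0) := by
  have hδη : ∀ r > 0, δ r < η r := fun r hr => (hbound r hr).2.1
  have hanti : AntitoneOn η (Ioi 0) :=
    (strictAntiOn_of_deriv_neg (convex_Ioi 0)
      (fun r hr => (hreg.hasDerivAt_eta hr).continuousAt.continuousWithinAt)
      (fun r hr => (hbound r (interior_subset hr)).2.2)).antitoneOn
  have hη : Tendsto η atTop (𝓝 0) :=
    tendsto_nhds_zero_of_antitoneOn hanti
      (fun r hr => ((hbound r hr).1.trans (hδη r hr)).le)
      (fun _ hL => hreg.exists_eta_lt hθ hδη hanti hL)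
  refine ⟨tendsto_of_tendsto_of_tendsto_of_le_of_le' tendsto_const_nhds hη ?_ ?_, hη⟩
  · filter_upwards [eventually_gt_atTop 0] with r hr using (hbound r hr).1.le
  · filter_upwards [eventually_gt_atTop 0] with r hr using (hδη r hr).le

/-- A global regular solution of the polytropic static system (with `0 < δ < η` and
`η' < 0` on `(0,∞)`) satisfies `δ(r) → 0` and `η(r) → 0` as `r → ∞`. -/
theorem regularPoly_limits_at_infinity (γ β θ δc : ℝ) (hβ0 : β ≠ 0)
    (hθ : 0 < θ) (hδc : 0 < δc)
    (δ η : ℝ → ℝ) (hreg : IsRegularPolyGlobal γ β θ δ η)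
    (h0 : δ 0 = δc) (h0' : η 0 = δc)
    (hbound : ∀ r ∈ Ioi (0:ℝ), 0 < δ r ∧ δ r < η r ∧ deriv η r < 0) :
    Tendsto δ atTop (𝓝 0) ∧ Tendsto η atTop (𝓝 0) :=
  regularPoly_limits_at_infinity_general γ β θ hθ δ η hreg hbound
end
end

section
/- Let γ>2, 1<β≤γ, θ>0 and δ_c>0. Then there is no strongly regular solution of the polytropic static system defined on all of [0,∞) with δ(0)=η(0)=δ_c; i.e., the maximal interval of existence of the strongly regular solution with center datum δ_c is bounded. -/
open Real Set Filter Topology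

noncomputable section

/-!
Since `B ≥ 0` for `β > 1` (weighted AM–GM) and `β ≤ γ`, the equation gives
`δ' ≤ -θ r δ^{2-β} η^{β+1-γ} ≤ 0`. So `δ` decreases, its mean `η` lies between `δ(r)` and
`δ(0)`, and with `q = min (γ-2) (β-1) > 0` this yields `δ' ≤ -c r δ^{1-q}` with `c > 0`
depending only on `δ(0)`. Then `δ^q + c q r²/2` is nonincreasing, and positivity of `δ`
forces `r² < 2 δ(0)^q / (c q)`.
-/

lemma Bfun_nonneg {β y : ℝ} (hβ : 1 < β) (hy : 0 < y) : 0 ≤ Bfun β y := by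
  have hβ0 : 0 < β := by linarith
  have amgm := Real.geom_mean_le_arith_mean2_weighted (w₁ := 1 / β) (w₂ := (β - 1) / β)
    (p₁ := y) (p₂ := y ^ (1 + β))
    (one_div_nonneg.2 hβ0.le) (div_nonneg (by linarith) hβ0.le) hy.le (by positivity)
    (by field_simp; ring)
  have hpow : y ^ (1 / β) * (y ^ (1 + β)) ^ ((β - 1) / β) = y ^ β := by
    rw [← Real.rpow_mul hy.le, ← Real.rpow_add hy]
    congr 1
    field_simp
    ring
  rw [hpow] at amgm
  have hnum : 0 ≤ y + (β - 1) * y ^ (1 + β) - β * y ^ β := by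
    have := mul_le_mul_of_nonneg_left amgm hβ0.le
    field_simp at this
    linarith
  rw [Bfun, if_neg hβ.ne']
  exact div_nonneg hnum (by nlinarith)

lemma polyRHS_le {γ β θ d e r : ℝ} (hβ : 1 < β) (hβγ : β ≤ γ) (hd : 0 < d) (he : 0 < e)
    (hr : 0 ≤ r) : polyRHS γ β θ d e r ≤ -(θ * r * d ^ (2 - β) * e ^ (β + 1 - γ)) := by
  have hB : 3 * (β - γ) * Bfun β (d / e) * e / r ≤ 0 := by
    have := mul_nonneg (Bfun_nonneg hβ (div_pos hd he)) he.le
    exact div_nonpos_of_nonpos_of_nonneg (by nlinarith) hr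
  have hpow : (d / e) ^ (1 - β) * (θ * r * e ^ (2 - γ) * d)
      = θ * r * d ^ (2 - β) * e ^ (β + 1 - γ) := by
    rw [Real.div_rpow hd.le he.le, show 2 - β = (1 - β) + 1 by ring,
      Real.rpow_add_one hd.ne', show β + 1 - γ = (2 - γ) - (1 - β) by ring,
      Real.rpow_sub he (2 - γ) (1 - β)]
    field_simp
  calc polyRHS γ β θ d e r
      ≤ (d / e) ^ (1 - β) * -(θ * r * e ^ (2 - γ) * d) := by
        unfold polyRHS
        gcongr
        linarith
    _ = -(θ * r * d ^ (2 - β) * e ^ (β + 1 - γ)) := by rw [mul_neg, hpow]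

lemma rpow_mul_rpow_le_of_le_of_le {a b d e d₀ : ℝ} (hd : 0 < d) (hde : d ≤ e) (he : e ≤ d₀) :
    d₀ ^ (min a b - a) * d ^ (1 - min a b) ≤ d ^ (1 - b) * e ^ (b - a) := by
  rcases le_total a b with hab | hab
  · rw [min_eq_left hab, sub_self, Real.rpow_zero, one_mul,
      show 1 - a = (1 - b) + (b - a) by ring, Real.rpow_add hd]
    gcongr
  · rw [min_eq_right hab, mul_comm]
    gcongr d ^ (1 - b) * ?_
    exact Real.rpow_le_rpow_of_nonpos (hd.trans_le hde) he (by linarith)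

section PolyEta

variable {f g : ℝ → ℝ} {r : ℝ}

lemma polyEta_const (a : ℝ) (hr : r ≠ 0) : polyEta (fun _ => a) r = a := by
  simp only [polyEta, intervalIntegral.integral_const_mul, integral_pow]
  norm_num
  field_simp

lemma polyEta_pos (hr : 0 < r) (hf : ContinuousOn f (Icc 0 r))
    (hpos : ∀ s ∈ Ioo 0 r, 0 < f s) : 0 < polyEta f r := by
  have hint : 0 < ∫ s in (0:ℝ)..r, f s * s ^ 2 := by
    refine intervalIntegral.intervalIntegral_pos_of_pos_on ?_ (fun s hs => ?_) hr
    · exact (hf.mul (continuous_pow 2).continuousOn).intervalIntegrable_of_Icc hr.le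
    · exact mul_pos (hpos s hs) (pow_pos hs.1 2)
  unfold polyEta
  positivity

lemma polyEta_mono (hr : 0 < r) (hf : ContinuousOn f (Icc 0 r)) (hg : ContinuousOn g (Icc 0 r))
    (hfg : ∀ s ∈ Icc 0 r, f s ≤ g s) : polyEta f r ≤ polyEta g r := by
  unfold polyEta
  gcongr
  refine intervalIntegral.integral_mono_on hr.le ?_ ?_
    (fun s hs => mul_le_mul_of_nonneg_right (hfg s hs) (sq_nonneg s))
  · exact (hf.mul (continuous_pow 2).continuousOn).intervalIntegrable_of_Icc hr.le
  · exact (hg.mul (continuous_pow 2).continuousOn).intervalIntegrable_of_Icc hr.le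

lemma polyEta_mem_Icc_of_antitoneOn (hr : 0 < r) (hf : ContinuousOn f (Icc 0 r))
    (hanti : AntitoneOn f (Icc 0 r)) : polyEta f r ∈ Icc (f r) (f 0) := by
  have h0 : (0:ℝ) ∈ Icc 0 r := left_mem_Icc.2 hr.le
  have hr' : r ∈ Icc 0 r := right_mem_Icc.2 hr.le
  constructor
  · calc f r = polyEta (fun _ => f r) r := (polyEta_const _ hr.ne').symm
      _ ≤ polyEta f r := polyEta_mono hr continuousOn_const hf
          (fun s hs => hanti hs hr' hs.2)
  · calc polyEta f r ≤ polyEta (fun _ => f 0) r := polyEta_mono hr hf continuousOn_const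
          (fun s hs => hanti h0 hs hs.1)
      _ = f 0 := polyEta_const _ hr.ne'

end PolyEta

lemma antitoneOn_rpow_add_sq {δ : ℝ → ℝ} {R c q : ℝ}
    (hcont : ContinuousOn δ (Ico 0 R)) (hdiff : ∀ r ∈ Ioo 0 R, DifferentiableAt ℝ δ r)
    (hpos : ∀ r ∈ Ico 0 R, 0 < δ r) (hq : 0 < q)
    (hD : ∀ r ∈ Ioo 0 R, deriv δ r ≤ -(c * r * δ r ^ (1 - q))) :
    AntitoneOn (fun r => δ r ^ q + c * q * r ^ 2 / 2) (Ico 0 R) := by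
  have hderiv : ∀ r ∈ Ioo 0 R, HasDerivAt (fun r => δ r ^ q + c * q * r ^ 2 / 2)
      (deriv δ r * q * δ r ^ (q - 1) + c * q * r) r := by
    intro r hr
    have hpow := (hdiff r hr).hasDerivAt.rpow_const (p := q)
      (Or.inl (hpos r (Ioo_subset_Ico_self hr)).ne')
    have hsq : HasDerivAt (fun x : ℝ => c * q * x ^ 2 / 2) (c * q * r) r := by
      simpa using (((hasDerivAt_pow 2 r).const_mul (c * q)).div_const 2).congr_deriv (by ring)
    exact hpow.add hsq
  refine antitoneOn_of_deriv_nonpos (convex_Ico 0 R) ?_ ?_ ?_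
  · exact (hcont.rpow_const fun x hx => Or.inl (hpos x hx).ne').add (by fun_prop)
  · rw [interior_Ico]
    exact fun r hr => (hderiv r hr).differentiableAt.differentiableWithinAt
  · rw [interior_Ico]
    intro r hr
    have hδ := hpos r (Ioo_subset_Ico_self hr)
    have hinv : δ r ^ (1 - q) * δ r ^ (q - 1) = 1 := by
      rw [← Real.rpow_add hδ]
      norm_num
    have hfac : 0 ≤ q * δ r ^ (q - 1) := by positivity
    rw [(hderiv r hr).deriv]
    calc deriv δ r * q * δ r ^ (q - 1) + c * q * r
        = deriv δ r * (q * δ r ^ (q - 1)) + c * q * r := by ring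
      _ ≤ -(c * r * δ r ^ (1 - q)) * (q * δ r ^ (q - 1)) + c * q * r := by
          gcongr ?_ * _ + _
          exact hD r hr
      _ = 0 := by linear_combination (-(c * q * r)) * hinv

lemma le_sqrt_of_deriv_le_neg_mul_rpow {δ : ℝ → ℝ} {R c q : ℝ} (hc : 0 < c) (hq : 0 < q)
    (hcont : ContinuousOn δ (Ico 0 R)) (hdiff : ∀ r ∈ Ioo 0 R, DifferentiableAt ℝ δ r)
    (hpos : ∀ r ∈ Ico 0 R, 0 < δ r)
    (hD : ∀ r ∈ Ioo 0 R, deriv δ r ≤ -(c * r * δ r ^ (1 - q))) :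
    R ≤ √(2 * δ 0 ^ q / (c * q)) := by
  have hanti := antitoneOn_rpow_add_sq hcont hdiff hpos hq hD
  refine le_of_forall_lt_imp_le_of_dense fun r hrR => ?_
  rcases lt_or_ge r 0 with hr | hr
  · exact hr.le.trans (Real.sqrt_nonneg _)
  have hmem : r ∈ Ico 0 R := ⟨hr, hrR⟩
  have hR0 : (0:ℝ) ∈ Ico 0 R := ⟨le_rfl, hr.trans_lt hrR⟩
  have hmono : δ r ^ q + c * q * r ^ 2 / 2 ≤ δ 0 ^ q := by simpa using hanti hR0 hmem hr
  have hδq : 0 < δ r ^ q := Real.rpow_pos_of_pos (hpos r hmem) q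
  have hδ0 := hpos 0 hR0
  rw [Real.le_sqrt hr (by positivity), le_div_iff₀ (by positivity)]
  nlinarith

namespace IsRegularPoly

variable {γ β θ R : ℝ} {δ η : ℝ → ℝ}

lemma eta_pos (h : IsRegularPoly γ β θ R δ η) : ∀ r ∈ Ioo 0 R, 0 < η r := by
  obtain ⟨hcont, -, -, hpos, -, hη, -⟩ := h
  intro r hr
  rw [hη r hr]
  exact polyEta_pos hr.1 (hcont.mono (Icc_subset_Ico_right hr.2))
    fun s hs => hpos s ⟨hs.1.le, hs.2.trans hr.2⟩

lemma deriv_le (h : IsRegularPoly γ β θ R δ η) (hβ : 1 < β) (hβγ : β ≤ γ) :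
    ∀ r ∈ Ioo 0 R, deriv δ r ≤ -(θ * r * δ r ^ (2 - β) * η r ^ (β + 1 - γ)) := by
  intro r hr
  have hη := h.eta_pos r hr
  obtain ⟨-, -, -, hpos, -, -, heq⟩ := h
  rw [heq r hr]
  exact polyRHS_le hβ hβγ (hpos r (Ioo_subset_Ico_self hr)) hη hr.1.le

lemma antitoneOn (h : IsRegularPoly γ β θ R δ η) (hβ : 1 < β) (hβγ : β ≤ γ) (hθ : 0 < θ) :
    AntitoneOn δ (Ico 0 R) := by
  have hηpos := h.eta_pos
  have hD := h.deriv_le hβ hβγ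
  obtain ⟨hcont, hdiff, -, hpos, -⟩ := h
  refine antitoneOn_of_deriv_nonpos (convex_Ico 0 R) hcont ?_ ?_ <;> rw [interior_Ico]
  · exact fun r hr => (hdiff r hr).differentiableWithinAt
  · intro r hr
    have hδ := hpos r (Ioo_subset_Ico_self hr)
    have hη := hηpos r hr
    have : 0 ≤ θ * r * δ r ^ (2 - β) * η r ^ (β + 1 - γ) := by
      have := hr.1
      positivity
    linarith [hD r hr]

lemma eta_mem_Icc (h : IsRegularPoly γ β θ R δ η) (hβ : 1 < β) (hβγ : β ≤ γ) (hθ : 0 < θ) :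
    ∀ r ∈ Ioo 0 R, η r ∈ Icc (δ r) (δ 0) := by
  have hanti := h.antitoneOn hβ hβγ hθ
  obtain ⟨hcont, -, -, -, -, hη, -⟩ := h
  intro r hr
  have hsub : Icc 0 r ⊆ Ico 0 R := Icc_subset_Ico_right hr.2
  rw [hη r hr]
  exact polyEta_mem_Icc_of_antitoneOn hr.1 (hcont.mono hsub) (hanti.mono hsub)

lemma deriv_le_neg_mul_rpow (h : IsRegularPoly γ β θ R δ η) (hβ : 1 < β) (hβγ : β ≤ γ)
    (hθ : 0 < θ) : ∀ r ∈ Ioo 0 R, deriv δ r ≤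
      -(θ * δ 0 ^ (min (γ - 2) (β - 1) - (γ - 2)) * r * δ r ^ (1 - min (γ - 2) (β - 1))) := by
  have hD := h.deriv_le hβ hβγ
  have hη := h.eta_mem_Icc hβ hβγ hθ
  obtain ⟨-, -, -, hpos, -⟩ := h
  intro r hr
  obtain ⟨hδη, hη0⟩ := hη r hr
  have hpow := rpow_mul_rpow_le_of_le_of_le (a := γ - 2) (b := β - 1)
    (hpos r (Ioo_subset_Ico_self hr)) hδη hη0
  rw [show 1 - (β - 1) = 2 - β by ring, show β - 1 - (γ - 2) = β + 1 - γ by ring] at hpow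
  have hθr : 0 ≤ θ * r := mul_nonneg hθ.le hr.1.le
  calc deriv δ r ≤ -(θ * r * δ r ^ (2 - β) * η r ^ (β + 1 - γ)) := hD r hr
    _ ≤ _ := by
      rw [mul_assoc (θ * r)]
      have := mul_le_mul_of_nonneg_left hpow hθr
      linarith

lemma le_sqrt (h : IsRegularPoly γ β θ R δ η) (hγ : 2 < γ) (hβ : 1 < β) (hβγ : β ≤ γ)
    (hθ : 0 < θ) : R ≤ √(2 * δ 0 ^ min (γ - 2) (β - 1) /
      (θ * δ 0 ^ (min (γ - 2) (β - 1) - (γ - 2)) * min (γ - 2) (β - 1))) := by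
  have hD := h.deriv_le_neg_mul_rpow hβ hβγ hθ
  obtain ⟨hcont, hdiff, -, hpos, -⟩ := h
  rcases le_or_gt R 0 with hR | hR
  · exact hR.trans (Real.sqrt_nonneg _)
  have hδ0 : 0 < δ 0 := hpos 0 ⟨le_rfl, hR⟩
  exact le_sqrt_of_deriv_le_neg_mul_rpow (by positivity) (lt_min (by linarith) (by linarith))
    hcont hdiff hpos hD

end IsRegularPoly

lemma IsRegularPolyGlobal.isRegularPoly {γ β θ : ℝ} {δ η : ℝ → ℝ}
    (h : IsRegularPolyGlobal γ β θ δ η) (R : ℝ) : IsRegularPoly γ β θ R δ η := by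
  obtain ⟨hcont, hdiff, hderiv, hpos, h0, hη, heq⟩ := h
  exact ⟨hcont.mono Ico_subset_Ici_self, fun r hr => hdiff r hr.1,
    hderiv.mono Ioo_subset_Ioi_self, fun r hr => hpos r hr.1, h0,
    fun r hr => hη r hr.1, fun r hr => heq r hr.1⟩

theorem stronglyRegularPoly_Rmax_finite_general (γ β θ δc : ℝ)
    (hγ : 2 < γ) (hβ : 1 < β) (hβγ : β ≤ γ) (hθ : 0 < θ) :
    (¬ ∃ δ η : ℝ → ℝ, IsStronglyRegularPolyGlobal γ β θ δ η ∧ δ 0 = δc) ∧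
    (∃ M : ℝ, ∀ R : ℝ, ∀ δ η : ℝ → ℝ,
      IsStronglyRegularPoly γ β θ R δ η → δ 0 = δc → R ≤ M) := by
  set q := min (γ - 2) (β - 1)
  set M := √(2 * δc ^ q / (θ * δc ^ (q - (γ - 2)) * q))
  have hbound : ∀ R : ℝ, ∀ δ η : ℝ → ℝ,
      IsStronglyRegularPoly γ β θ R δ η → δ 0 = δc → R ≤ M := by
    rintro R δ η ⟨h, -⟩ rfl
    exact h.le_sqrt hγ hβ hβγ hθ
  refine ⟨?_, M, hbound⟩
  rintro ⟨δ, η, ⟨h, h0, hlim⟩, hδc⟩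
  have := hbound (M + 1) δ η ⟨h.isRegularPoly (M + 1), h0.mono Ico_subset_Ici_self, hlim⟩ hδc
  linarith

/-- For `γ > 2` and `1 < β ≤ γ` the strongly regular solution with center datum
`δ_c` has bounded maximal interval of existence: there is no global strongly
regular solution, and all strongly regular solutions live on a uniformly bounded
interval. -/
theorem stronglyRegularPoly_Rmax_finite (γ β θ δc : ℝ)
    (hγ : 2 < γ) (hβ : 1 < β) (hβγ : β ≤ γ) (hθ : 0 < θ) (hδc : 0 < δc) :
    (¬ ∃ δ η : ℝ → ℝ, IsStronglyRegularPolyGlobal γ β θ δ η ∧ δ 0 = δc) ∧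
    (∃ M : ℝ, ∀ R : ℝ, ∀ δ η : ℝ → ℝ,
      IsStronglyRegularPoly γ β θ R δ η → δ 0 = δc → R ≤ M) :=
  stronglyRegularPoly_Rmax_finite_general γ β θ δc hγ hβ hβγ hθ
end
end
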